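/- arXiv:1005.1214 — 3 statements merged into one kernel-verified Lean document; each statement's English description precedes it below -/
import Mathlib

section
/- Let (N_n) be a sequence of positive integers and A_n = N_1 + ... + N_n. Then the series ∑_{n≥1} N_n / A_n² converges, and in fact ∑_{n≥1} N_n / A_n² ≤ 2/N_1 ≤ 2. -/
open Finset

/-!
Writing `A n` for the partial sums, the term `N n / A n ^ 2 = (A n - A (n-1)) / A n ^ 2` is at most
`1 / A (n-1) - 1 / A n`, since `A (n-1) ≤ A n`. The series therefore telescopes to at most
`1 / A 1 = 1 / N 1`, and its first term contributes another `1 / N 1`.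
-/

theorem sub_div_sq_le_inv_sub_inv {a b : ℝ} (ha : 0 < a) (hab : a ≤ b) :
    (b - a) / b ^ 2 ≤ a⁻¹ - b⁻¹ := by
  have hb : 0 < b := ha.trans_le hab
  rw [inv_sub_inv ha.ne' hb.ne', sq]
  exact div_le_div_of_nonneg_left (sub_nonneg.2 hab) (mul_pos ha hb)
    (mul_le_mul_of_nonneg_right hab hb.le)

theorem sum_range_sub_div_sq_le_of_monotone {S : ℕ → ℝ} (hS : Monotone S) (hS0 : 0 < S 0)
    (m : ℕ) :
    ∑ n ∈ range m, (S (n + 1) - S n) / S (n + 1) ^ 2 ≤ (S 0)⁻¹ - (S m)⁻¹ := by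
  have hpos : ∀ n, 0 < S n := fun n => hS0.trans_le (hS (Nat.zero_le n))
  calc ∑ n ∈ range m, (S (n + 1) - S n) / S (n + 1) ^ 2
      ≤ ∑ n ∈ range m, ((S n)⁻¹ - (S (n + 1))⁻¹) :=
        sum_le_sum fun n _ => sub_div_sq_le_inv_sub_inv (hpos n) (hS n.le_succ)
    _ = (S 0)⁻¹ - (S m)⁻¹ := sum_range_sub' _ _

theorem sum_range_div_partialSum_sq_le {a : ℕ → ℝ} (ha : ∀ n, 0 ≤ a n) (ha0 : 0 < a 0)
    (m : ℕ) :
    ∑ n ∈ range m, a n / (∑ i ∈ range (n + 1), a i) ^ 2 ≤ 2 / a 0 := by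
  set S : ℕ → ℝ := fun n => ∑ i ∈ range (n + 1), a i with hS_def
  change ∑ n ∈ range m, a n / S n ^ 2 ≤ 2 / a 0
  have hS_mono : Monotone S := monotone_nat_of_le_succ fun n => by
    simpa [hS_def, sum_range_succ _ (n + 1)] using ha (n + 1)
  have hS0 : S 0 = a 0 := by simp [hS_def]
  have hS_pos : ∀ n, 0 < S n := fun n => ha0.trans_le (hS0 ▸ hS_mono (Nat.zero_le n))
  have h_incr : ∀ n, a (n + 1) = S (n + 1) - S n := fun n => by
    simp [hS_def, sum_range_succ _ (n + 1)]
  cases m with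
  | zero => simp only [sum_range_zero]; positivity
  | succ m =>
    have h_tail := sum_range_sub_div_sq_le_of_monotone hS_mono (hS_pos 0) m
    have h_head : a 0 / S 0 ^ 2 = (a 0)⁻¹ := by rw [hS0]; field_simp
    have h_two : 2 / a 0 = (a 0)⁻¹ + (a 0)⁻¹ := by ring
    rw [sum_range_succ', h_head, h_two]
    simp only [h_incr]
    rw [hS0] at h_tail
    linarith [inv_pos.2 (hS_pos m)]

theorem summable_div_partialSum_sq {a : ℕ → ℝ} (ha : ∀ n, 0 ≤ a n) (ha0 : 0 < a 0) :
    Summable fun n => a n / (∑ i ∈ range (n + 1), a i) ^ 2 :=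
  summable_of_sum_range_le (fun n => div_nonneg (ha n) (sq_nonneg _))
    (sum_range_div_partialSum_sq_le ha ha0)

theorem tsum_div_partialSum_sq_le {a : ℕ → ℝ} (ha : ∀ n, 0 ≤ a n) (ha0 : 0 < a 0) :
    ∑' n, a n / (∑ i ∈ range (n + 1), a i) ^ 2 ≤ 2 / a 0 :=
  (summable_div_partialSum_sq ha ha0).tsum_le_of_sum_range_le
    (sum_range_div_partialSum_sq_le ha ha0)

/-- For positive integers `N n` (indexed from 1) with partial sums
`A n = N 1 + ⋯ + N n`, the series `∑ N n / A n ^ 2` converges and is at most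
`2 / N 1 ≤ 2`. -/
theorem stmt_0 (N : ℕ → ℕ) (hN : ∀ n, 1 ≤ n → 1 ≤ N n) :
    Summable (fun n : ℕ =>
      (N (n + 1) : ℝ) / (∑ i ∈ Finset.range (n + 1), (N (i + 1) : ℝ)) ^ 2) ∧
    (∑' n : ℕ, (N (n + 1) : ℝ) / (∑ i ∈ Finset.range (n + 1), (N (i + 1) : ℝ)) ^ 2)
      ≤ 2 / (N 1 : ℝ) ∧
    (2 : ℝ) / (N 1 : ℝ) ≤ 2 := by
  have hN1 : (1 : ℝ) ≤ N 1 := by exact_mod_cast hN 1 le_rfl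
  have ha : ∀ n, (0 : ℝ) ≤ N (n + 1) := fun n => Nat.cast_nonneg _
  have ha0 : (0 : ℝ) < N (0 + 1) := zero_lt_one.trans_le hN1
  refine ⟨summable_div_partialSum_sq ha ha0, tsum_div_partialSum_sq_le ha ha0, ?_⟩
  rw [div_le_iff₀ (by positivity)]
  linarith
end

section
/- The map f : (ξ, α, τ²) ↦ (α/ξ, α/ξ² + τ², 2α/ξ³) from Θ = (0,∞) × (0,∞) × [0,∞) to its image is a bijection, with inverse f⁻¹(m₁, m̄₂, m̄₃) = (√(2m₁/m̄₃), m₁√(2m₁/m̄₃), m̄₂ − √(2 m₁ m̄₃)/2). -/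
/-!
From `m₁ = α/ξ` and `m̄₃ = 2α/ξ³` one reads off `2m₁/m̄₃ = ξ²` and `2m₁m̄₃ = (2α/ξ²)²`, so the
two square roots recover `ξ` and `2α/ξ²`; then `α = m₁ξ` and `τ² = m̄₂ − α/ξ²`. Thus the
explicit map is a left inverse of `f` on `Θ`, which makes `f` injective there and the map
an inverse on the image.
-/

namespace MomentMap

noncomputable def toMoments (p : ℝ × ℝ × ℝ) : ℝ × ℝ × ℝ :=
  (p.2.1 / p.1, p.2.1 / p.1 ^ 2 + p.2.2, 2 * p.2.1 / p.1 ^ 3)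

noncomputable def ofMoments (m : ℝ × ℝ × ℝ) : ℝ × ℝ × ℝ :=
  (√(2 * m.1 / m.2.2), m.1 * √(2 * m.1 / m.2.2), m.2.1 - √(2 * m.1 * m.2.2) / 2)

lemma sqrt_two_mul_div_div_eq {ξ α : ℝ} (hξ : 0 < ξ) (hα : α ≠ 0) :
    √(2 * (α / ξ) / (2 * α / ξ ^ 3)) = ξ := by
  have hsq : 2 * (α / ξ) / (2 * α / ξ ^ 3) = ξ ^ 2 := by
    field_simp
  rw [hsq, Real.sqrt_sq hξ.le]

lemma sqrt_two_mul_div_mul_eq {ξ α : ℝ} (hξ : 0 < ξ) (hα : 0 ≤ α) :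
    √(2 * (α / ξ) * (2 * α / ξ ^ 3)) = 2 * α / ξ ^ 2 := by
  have hsq : 2 * (α / ξ) * (2 * α / ξ ^ 3) = (2 * α / ξ ^ 2) ^ 2 := by
    field_simp
  rw [hsq, Real.sqrt_sq (by positivity)]

lemma ofMoments_toMoments {p : ℝ × ℝ × ℝ} (hξ : 0 < p.1) (hα : 0 < p.2.1) :
    ofMoments (toMoments p) = p := by
  obtain ⟨ξ, α, τ⟩ := p
  simp only [toMoments, ofMoments, sqrt_two_mul_div_div_eq hξ hα.ne',
    sqrt_two_mul_div_mul_eq hξ hα.le]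
  refine Prod.ext rfl (Prod.ext ?_ ?_)
  · field_simp
  · field_simp
    ring

end MomentMap

/-- The map `f : (ξ, α, τ²) ↦ (α/ξ, α/ξ² + τ², 2α/ξ³)` from
`Θ = (0,∞) × (0,∞) × [0,∞)` to its image is a bijection, with inverse
`g(m₁, m̄₂, m̄₃) = (√(2m₁/m̄₃), m₁ √(2m₁/m̄₃), m̄₂ − √(2 m₁ m̄₃)/2)`. -/
theorem stmt_7 :
    let f : ℝ × ℝ × ℝ → ℝ × ℝ × ℝ := fun p =>
      (p.2.1 / p.1, p.2.1 / p.1 ^ 2 + p.2.2, 2 * p.2.1 / p.1 ^ 3)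
    let g : ℝ × ℝ × ℝ → ℝ × ℝ × ℝ := fun m =>
      (Real.sqrt (2 * m.1 / m.2.2), m.1 * Real.sqrt (2 * m.1 / m.2.2),
        m.2.1 - Real.sqrt (2 * m.1 * m.2.2) / 2)
    let Θ : Set (ℝ × ℝ × ℝ) := {p | 0 < p.1 ∧ 0 < p.2.1 ∧ 0 ≤ p.2.2}
    Set.BijOn f Θ (f '' Θ) ∧
    (∀ p ∈ Θ, g (f p) = p) ∧
    (∀ m ∈ f '' Θ, f (g m) = m) := by
  intro f g Θ
  have hleft : Set.LeftInvOn MomentMap.ofMoments MomentMap.toMoments Θ := fun p hp =>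
    MomentMap.ofMoments_toMoments hp.1 hp.2.1
  exact ⟨hleft.injOn.bijOn_image, hleft, hleft.rightInvOn_image⟩
end

section
/- Suppose each of n independent copies of a process with independent increments is observed at times 0 = t_{i0} < t_{i1} < ⋯ < t_{iN_i}, and every increment ΔD_{ij} over an interval of length Δt_{ij} has mean m₁ Δt_{ij} and variance (α/ξ² + τ²)Δt_{ij}. If ∑_{n≥1} (∑_{j=1}^{N_n} 1/Δt_{nj}) (∑_{i=1}^n N_i)^{−2} < ∞, then the estimator m̂_n^{(1)} = (∑_{i=1}^n N_i)^{−1} ∑_{i=1}^n ∑_{j=1}^{N_i} ΔD_{ij}/Δt_{ij} converges almost surely to m₁. -/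
/-!
The centred, rescaled increments `X i j = ΔD i j / Δt i j - m₁` are independent, have mean zero
and variance `(α / ξ² + τ²) / Δt i j`. With `S i = ∑_{k ≤ i} N k`, hypothesis (H₁) says that the
weighted row sums `(∑_j X i j) / S i` have summable variances, so their partial sums form an
L²-bounded martingale for the filtration generated by the first rows, and converge a.s.
Since `S` increases to infinity, Kronecker's lemma turns this into
`(∑_{i ≤ n} ∑_j X i j) / S n → 0`, i.e. `m̂ₙ₊₁ - m₁ → 0`.
-/

open MeasureTheory ProbabilityTheory Filter Finset
open Asymptotics Topology

theorem sum_range_succ_eq_abel {b r x : ℕ → ℝ} (hx : ∀ k, x k = b k * (r k - r (k + 1)))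
    (n : ℕ) : ∑ k ∈ range (n + 1), x k
      = b 0 * r 0 - b n * r (n + 1) + ∑ k ∈ range n, (b (k + 1) - b k) * r (k + 1) := by
  induction n with
  | zero => simp [hx, mul_sub]
  | succ n ih =>
    rw [sum_range_succ, ih, sum_range_succ, hx]
    ring

/-- Kronecker's lemma. -/
theorem tendsto_sum_range_succ_div_of_tendsto_sum_div {b x : ℕ → ℝ} {L : ℝ} (hb : Monotone b)
    (hb0 : 0 < b 0) (hbtop : Tendsto b atTop atTop)
    (hx : Tendsto (fun n => ∑ k ∈ range n, x k / b k) atTop (𝓝 L)) :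
    Tendsto (fun n => (∑ k ∈ range (n + 1), x k) / b n) atTop (𝓝 0) := by
  have hbpos k : 0 < b k := hb0.trans_le (hb k.zero_le)
  set r : ℕ → ℝ := fun k => L - ∑ i ∈ range k, x i / b i
  have hr : Tendsto r atTop (𝓝 0) := by simpa using tendsto_const_nhds (x := L) |>.sub hx
  have hxr k : x k = b k * (r k - r (k + 1)) := by
    simp only [r, sum_range_succ]
    field_simp [(hbpos k).ne']
    ring
  have hsmall : (fun n => ∑ k ∈ range n, (b (k + 1) - b k) * r (k + 1)) =o[atTop] b := by
    have hinc k : 0 ≤ b (k + 1) - b k := sub_nonneg.2 (hb k.le_succ)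
    have hterm : (fun k => (b (k + 1) - b k) * r (k + 1)) =o[atTop] fun k => b (k + 1) - b k := by
      simpa using (isBigO_refl (fun k => b (k + 1) - b k) atTop).mul_isLittleO
        ((isLittleO_one_iff ℝ).2 (hr.comp (tendsto_add_atTop_nat 1)))
    have htel : ∀ n, ∑ k ∈ range n, (b (k + 1) - b k) = b n - b 0 := sum_range_sub b
    refine (hterm.sum_range hinc ?_).trans_isBigO (IsBigO.of_bound 1 ?_)
    · exact (tendsto_atTop_add_const_right atTop (-b 0) hbtop).congr fun n => by
        rw [htel, sub_eq_add_neg]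
    · filter_upwards with n
      rw [htel, one_mul, Real.norm_of_nonneg (sub_nonneg.2 (hb n.zero_le)),
        Real.norm_of_nonneg (hbpos n).le]
      linarith
  have hlim : Tendsto (fun n => b 0 * r 0 / b n - r (n + 1)
      + (∑ k ∈ range n, (b (k + 1) - b k) * r (k + 1)) / b n) atTop (𝓝 (0 - 0 + 0)) :=
    ((tendsto_const_nhds.div_atTop hbtop).sub (hr.comp (tendsto_add_atTop_nat 1))).add
      hsmall.tendsto_div_nhds_zero
  rw [sub_zero, add_zero] at hlim
  refine hlim.congr fun n => ?_
  rw [sum_range_succ_eq_abel hxr]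
  field_simp [(hbpos n).ne']

section Moments

variable {Ω : Type*} {m0 : MeasurableSpace Ω} {μ : Measure Ω}

theorem variance_div_const (c : ℝ) (X : Ω → ℝ) (μ : Measure Ω) :
    Var[fun ω => X ω / c; μ] = Var[X; μ] / c ^ 2 := by
  simp_rw [div_eq_mul_inv, variance_mul_const, inv_pow]

theorem integral_div_sub_eq_zero [IsProbabilityMeasure μ] {X : Ω → ℝ} (hX : Integrable X μ)
    {t m : ℝ} (ht : t ≠ 0) (hmean : μ[X] = m * t) : μ[fun ω => X ω / t - m] = 0 := by
  rw [integral_sub (hX.div_const _) (integrable_const m), integral_div, hmean, integral_const]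
  field_simp
  simp

theorem eLpNorm_two_eq_evariance_rpow {X : Ω → ℝ} (hX : μ[X] = 0) :
    eLpNorm X 2 μ = evariance X μ ^ (1 / 2 : ℝ) := by
  rw [eLpNorm_eq_lintegral_rpow_enorm_toReal two_ne_zero ENNReal.ofNat_ne_top, evariance, hX]
  norm_num

end Moments

section IndependentIncrements

variable {Ω : Type*} {m0 : MeasurableSpace Ω} {μ : Measure Ω} {ℱ : Filtration ℕ m0}
  {W : ℕ → Ω → ℝ}

theorem indepFun_of_lt_of_indep_filtration (hmeas : ∀ n, Measurable[ℱ (n + 1)] (W n))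
    (hindep : ∀ n, Indep (MeasurableSpace.comap (W n) inferInstance) (ℱ n) μ) {i k : ℕ}
    (hik : i < k) : IndepFun (W i) (W k) μ :=
  (indep_of_indep_of_le_right (hindep k) ((hmeas i).comap_le.trans (ℱ.mono hik))).symm

theorem martingale_sum_range_of_indep_filtration [IsFiniteMeasure μ]
    (hmeas : ∀ n, Measurable[ℱ (n + 1)] (W n))
    (hindep : ∀ n, Indep (MeasurableSpace.comap (W n) inferInstance) (ℱ n) μ)
    (hint : ∀ n, Integrable (W n) μ) (hmean : ∀ n, μ[W n] = 0) :
    Martingale (fun n => ∑ i ∈ range n, W i) ℱ μ := by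
  refine martingale_of_condExp_sub_eq_zero_nat (fun n => ?_)
    (fun n => integrable_finsetSum' _ fun i _ => hint i) (fun n => ?_)
  · refine Finset.stronglyMeasurable_sum _ fun i hi => ?_
    exact ((hmeas i).mono (ℱ.mono (mem_range.1 hi)) le_rfl).stronglyMeasurable
  · have hW : Measurable (W n) := (hmeas n).mono (ℱ.le _) le_rfl
    rw [sum_range_succ, add_sub_cancel_left]
    filter_upwards [condExp_indep_eq hW.comap_le (ℱ.le n)
      (comap_measurable (W n)).stronglyMeasurable (hindep n)] with ω hω
    rw [hω, hmean, Pi.zero_apply]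

theorem ae_exists_tendsto_sum_range_of_indep_filtration [IsProbabilityMeasure μ]
    (hmeas : ∀ n, Measurable[ℱ (n + 1)] (W n))
    (hindep : ∀ n, Indep (MeasurableSpace.comap (W n) inferInstance) (ℱ n) μ)
    (hL2 : ∀ n, MemLp (W n) 2 μ) (hmean : ∀ n, μ[W n] = 0)
    (hvar : Summable fun n => Var[W n; μ]) :
    ∀ᵐ ω ∂μ, ∃ l, Tendsto (fun n => ∑ i ∈ range n, W i ω) atTop (𝓝 l) := by
  have hint n : Integrable (W n) μ := (hL2 n).integrable one_le_two
  have hM := martingale_sum_range_of_indep_filtration hmeas hindep hint hmean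
  set R := √(∑' n, Var[W n; μ])
  have hbdd n : eLpNorm (∑ i ∈ range n, W i) 1 μ ≤ R.toNNReal := by
    have hL2sum : MemLp (∑ i ∈ range n, W i) 2 μ := memLp_finsetSum' _ fun i _ => hL2 i
    have hmean_sum : μ[∑ i ∈ range n, W i] = 0 := by
      simp [integral_finsetSum _ fun i _ => hint i, hmean]
    have hvar_sum : Var[∑ i ∈ range n, W i; μ] ≤ ∑' n, Var[W n; μ] := by
      rw [IndepFun.variance_sum (fun i _ => hL2 i) fun i _ k _ hik => ?_]
      · exact hvar.sum_le_tsum _ fun i _ => variance_nonneg _ _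
      · rcases hik.lt_or_gt with hik | hik
        · exact indepFun_of_lt_of_indep_filtration hmeas hindep hik
        · exact (indepFun_of_lt_of_indep_filtration hmeas hindep hik).symm
    calc eLpNorm (∑ i ∈ range n, W i) 1 μ
        ≤ eLpNorm (∑ i ∈ range n, W i) 2 μ :=
          eLpNorm_le_eLpNorm_of_exponent_le one_le_two hL2sum.1
      _ = ENNReal.ofReal (Var[∑ i ∈ range n, W i; μ]) ^ (1 / 2 : ℝ) := by
          rw [eLpNorm_two_eq_evariance_rpow hmean_sum, hL2sum.ofReal_variance_eq]
      _ ≤ ENNReal.ofReal (∑' n, Var[W n; μ]) ^ (1 / 2 : ℝ) := by gcongr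
      _ = R.toNNReal := by
          rw [ENNReal.ofReal_rpow_of_nonneg (tsum_nonneg fun _ => variance_nonneg _ _)
            (by norm_num), ← Real.sqrt_eq_rpow]
          rfl
  simpa using hM.submartingale.exists_ae_tendsto_of_bdd hbdd

end IndependentIncrements

section RowFiltration

variable {Ω κ β : Type*} {m0 : MeasurableSpace Ω} [mβ : MeasurableSpace β] {μ : Measure Ω}
  {Y : ℕ × κ → Ω → β} (hY : ∀ p, Measurable (Y p))

def rowFiltration : Filtration ℕ m0 where
  seq n := ⨆ p ∈ {p : ℕ × κ | p.1 < n}, MeasurableSpace.comap (Y p) mβ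
  mono' _ _ hmn := biSup_mono fun _ hp => lt_of_lt_of_le hp hmn
  le' _ := iSup₂_le fun p _ => (hY p).comap_le

theorem iSup_comap_row_le_rowFiltration_succ (n : ℕ) :
    ⨆ j, MeasurableSpace.comap (Y (n, j)) mβ ≤ rowFiltration hY (n + 1) :=
  iSup_le fun j => le_biSup (fun p => MeasurableSpace.comap (Y p) mβ)
    (show (n, j).1 < n + 1 from n.lt_succ_self)

theorem indep_iSup_comap_row_rowFiltration (hind : iIndepFun Y μ) (n : ℕ) :
    Indep (⨆ j, MeasurableSpace.comap (Y (n, j)) mβ) (rowFiltration hY n) μ := by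
  refine indep_of_indep_of_le_left (indep_iSup_of_disjoint (fun p => (hY p).comap_le)
    hind.iIndep (S := {p | p.1 = n}) ?_) ?_
  · exact Set.disjoint_left.2 fun p (hp : p.1 = n) (hp' : p.1 < n) => hp'.ne hp
  · exact iSup_le fun j => le_biSup (fun p => MeasurableSpace.comap (Y p) mβ)
      (show (n, j).1 = n from rfl)

end RowFiltration

theorem ae_exists_tendsto_sum_rows_div {Ω κ : Type*} {m0 : MeasurableSpace Ω}
    {μ : Measure Ω} [IsProbabilityMeasure μ] {X : ℕ × κ → Ω → ℝ} (s : ℕ → Finset κ)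
    (S : ℕ → ℝ) (hX : ∀ p, Measurable (X p)) (hind : iIndepFun X μ)
    (hL2 : ∀ p, MemLp (X p) 2 μ) (hmean : ∀ p, μ[X p] = 0)
    (hvar : Summable fun i => (∑ j ∈ s i, Var[X (i, j); μ]) / S i ^ 2) :
    ∀ᵐ ω ∂μ, ∃ l, Tendsto (fun n => ∑ i ∈ range n, (∑ j ∈ s i, X (i, j) ω) / S i) atTop (𝓝 l) := by
  have hrow i : Measurable[⨆ j, MeasurableSpace.comap (X (i, j)) inferInstance]
      fun ω => (∑ j ∈ s i, X (i, j) ω) / S i :=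
    (Finset.measurable_sum _ fun j _ =>
      Measurable.of_comap_le (le_iSup (fun j => MeasurableSpace.comap (X (i, j)) _) j)).div_const _
  have hL2row i : MemLp (fun ω => ∑ j ∈ s i, X (i, j) ω) 2 μ :=
    memLp_finsetSum _ fun j _ => hL2 (i, j)
  refine ae_exists_tendsto_sum_range_of_indep_filtration (ℱ := rowFiltration hX)
    (fun i => (hrow i).mono (iSup_comap_row_le_rowFiltration_succ hX i) le_rfl)
    (fun i => indep_of_indep_of_le_left (indep_iSup_comap_row_rowFiltration hX hind i)
      (hrow i).comap_le)
    (fun i => by simpa only [div_eq_mul_inv] using (hL2row i).mul_const (S i)⁻¹)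
    (fun i => ?_) (hvar.congr fun i => ?_)
  · rw [integral_div, integral_finsetSum _ fun j _ => (hL2 (i, j)).integrable one_le_two]
    simp [hmean]
  · rw [variance_div_const, ← IndepFun.variance_sum (fun j _ => hL2 (i, j))
      fun j _ k _ hjk => hind.indepFun (by simpa using hjk)]
    simp only [Finset.sum_fn]

theorem tendsto_inv_sum_mul_sum_of_tendsto_sum_div {N : ℕ → ℕ} (hN : ∀ i, 1 ≤ N i)
    {a : ℕ → ℕ → ℝ} {m l : ℝ}
    (h : Tendsto (fun n => ∑ i ∈ range n,
      (∑ j ∈ range (N i), (a i j - m)) / ∑ k ∈ range (i + 1), (N k : ℝ)) atTop (𝓝 l)) :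
    Tendsto (fun n => (∑ i ∈ range n, (N i : ℝ))⁻¹ * ∑ i ∈ range n, ∑ j ∈ range (N i), a i j)
      atTop (𝓝 m) := by
  set S : ℕ → ℝ := fun n => ∑ i ∈ range (n + 1), (N i : ℝ)
  have hS (n : ℕ) : (n : ℝ) + 1 ≤ S n := by
    simpa using Finset.sum_le_sum fun i (_ : i ∈ range (n + 1)) =>
      (Nat.one_le_cast.2 (hN i) : (1 : ℝ) ≤ N i)
  have hSmono : Monotone S := monotone_nat_of_le_succ fun n => by
    simp only [S, sum_range_succ _ (n + 1)]
    exact le_add_of_nonneg_right (Nat.cast_nonneg _)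
  have hStop : Tendsto S atTop atTop :=
    tendsto_atTop_mono hS (tendsto_atTop_add_const_right _ 1 tendsto_natCast_atTop_atTop)
  have hS0 : 0 < S 0 := by linarith [hS 0]
  rw [← tendsto_add_atTop_iff_nat 1]
  have hkron := (tendsto_sum_range_succ_div_of_tendsto_sum_div hSmono hS0 hStop h).const_add m
  rw [add_zero] at hkron
  refine hkron.congr fun n => ?_
  have hSn : S n ≠ 0 := by linarith [hS n]
  have hcenter : ∑ i ∈ range (n + 1), ∑ j ∈ range (N i), (a i j - m)
      = ∑ i ∈ range (n + 1), ∑ j ∈ range (N i), a i j - S n * m := by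
    simp [S, sum_sub_distrib, sum_mul]
  show m + _ / S n = (S n)⁻¹ * _
  rw [hcenter]
  field_simp
  ring

theorem stmt_10_general {Ω : Type*} [MeasureSpace Ω] (μ : Measure Ω) [IsProbabilityMeasure μ]
    (ΔD : ℕ → ℕ → Ω → ℝ) (Δt : ℕ → ℕ → ℝ) (N : ℕ → ℕ)
    (m₁ α ξ τ : ℝ)
    (hN : ∀ i, 1 ≤ N i) (hΔt : ∀ i j, 0 < Δt i j)
    (h2 : ∀ i j, MemLp (ΔD i j) 2 μ)
    (hindep : iIndepFun
      (fun p : ℕ × ℕ => ΔD p.1 p.2) μ)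
    (hmean : ∀ i j, ∫ ω, ΔD i j ω ∂μ = m₁ * Δt i j)
    (hvar : ∀ i j, variance (ΔD i j) μ = (α / ξ ^ 2 + τ ^ 2) * Δt i j)
    (hH1 : Summable (fun n : ℕ =>
      (∑ j ∈ Finset.range (N n), 1 / Δt n j)
        / (∑ i ∈ Finset.range (n + 1), (N i : ℝ)) ^ 2)) :
    ∀ᵐ ω ∂μ, Tendsto
      (fun n => (∑ i ∈ Finset.range n, (N i : ℝ))⁻¹ *
        ∑ i ∈ Finset.range n, ∑ j ∈ Finset.range (N i), ΔD i j ω / Δt i j)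
      atTop (nhds m₁) := by
  let Y : ℕ × ℕ → Ω → ℝ := fun p => (h2 p.1 p.2).1.mk _
  have hYae p : ΔD p.1 p.2 =ᵐ[μ] Y p := (h2 p.1 p.2).1.ae_eq_mk
  have hY p : Measurable (Y p) := (h2 p.1 p.2).1.stronglyMeasurable_mk.measurable
  let X : ℕ × ℕ → Ω → ℝ := fun p ω => Y p ω / Δt p.1 p.2 - m₁
  have hX p : Measurable (X p) := ((hY p).div_const _).sub_const _
  have hXind : iIndepFun X μ := (hindep.congr hYae).comp _ fun p =>
    (measurable_id.div_const (Δt p.1 p.2)).sub_const m₁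
  have hYL2 p : MemLp (Y p) 2 μ := (h2 p.1 p.2).ae_eq (hYae p)
  have hXL2 p : MemLp (X p) 2 μ := by
    refine MemLp.sub ?_ (memLp_const m₁)
    simpa only [div_eq_mul_inv] using (hYL2 p).mul_const (Δt p.1 p.2)⁻¹
  have hXmean p : μ[X p] = 0 := integral_div_sub_eq_zero ((hYL2 p).integrable one_le_two)
    (hΔt p.1 p.2).ne' (by rw [← integral_congr_ae (hYae p), hmean])
  have hXvar p : Var[X p; μ] = (α / ξ ^ 2 + τ ^ 2) * (1 / Δt p.1 p.2) := by
    rw [variance_sub_const ((hY p).div_const _).aestronglyMeasurable, variance_div_const,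
      ← variance_congr (hYae p), hvar]
    field_simp [(hΔt p.1 p.2).ne']
  have hsum := ae_exists_tendsto_sum_rows_div (fun i => range (N i))
    (fun i => ∑ k ∈ range (i + 1), (N k : ℝ)) hX hXind hXL2 hXmean
    (by simpa only [hXvar, ← mul_sum, mul_div_assoc] using hH1.mul_left (α / ξ ^ 2 + τ ^ 2))
  filter_upwards [hsum, ae_all_iff.2 hYae] with ω ⟨l, hl⟩ hω
  exact tendsto_inv_sum_mul_sum_of_tendsto_sum_div hN (l := l) (by simpa only [X, ← hω] using hl)

/-- If the increments `ΔD i j` (process `i` observed at `N i`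
instants, interval lengths `Δt i j > 0`) are independent with
`E[ΔD i j] = m₁ Δt i j` and `Var(ΔD i j) = (α/ξ² + τ²) Δt i j`, and if
(H₁) `∑_n (∑_{j<N n} 1/Δt n j) (∑_{i≤n} N i)⁻² < ∞`, then the moment estimator
`m̂ₙ⁽¹⁾ = (∑_{i<n} N i)⁻¹ ∑_{i<n} ∑_{j<N i} ΔD i j / Δt i j` converges a.s. to `m₁`. -/
theorem stmt_10 {Ω : Type*} [MeasureSpace Ω] (μ : Measure Ω) [IsProbabilityMeasure μ]
    (ΔD : ℕ → ℕ → Ω → ℝ) (Δt : ℕ → ℕ → ℝ) (N : ℕ → ℕ)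
    (m₁ α ξ τ : ℝ) (hξ : 0 < ξ)
    (hN : ∀ i, 1 ≤ N i) (hΔt : ∀ i j, 0 < Δt i j)
    (h2 : ∀ i j, MemLp (ΔD i j) 2 μ)
    (hindep : iIndepFun
      (fun p : ℕ × ℕ => ΔD p.1 p.2) μ)
    (hmean : ∀ i j, ∫ ω, ΔD i j ω ∂μ = m₁ * Δt i j)
    (hvar : ∀ i j, variance (ΔD i j) μ = (α / ξ ^ 2 + τ ^ 2) * Δt i j)
    (hH1 : Summable (fun n : ℕ =>
      (∑ j ∈ Finset.range (N n), 1 / Δt n j)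
        / (∑ i ∈ Finset.range (n + 1), (N i : ℝ)) ^ 2)) :
    ∀ᵐ ω ∂μ, Tendsto
      (fun n => (∑ i ∈ Finset.range n, (N i : ℝ))⁻¹ *
        ∑ i ∈ Finset.range n, ∑ j ∈ Finset.range (N i), ΔD i j ω / Δt i j)
      atTop (nhds m₁) :=
  stmt_10_general μ ΔD Δt N m₁ α ξ τ hN hΔt h2 hindep hmean hvar hH1
end
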